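/- If F : S^d × S^d → R^{p×p} is a positive definite matrix-valued kernel and R_1, …, R_p ∈ SO(d+1) are rotation matrices, then the kernel F^a defined componentwise by F^a_{ij}(x,y) = F_{ij}(R_i x, R_j y) is also positive definite, i.e., for all n, points x_1,…,x_n ∈ S^d and vectors a_1,…,a_n ∈ R^p, ∑_{ℓ,r} a_ℓᵀ F^a(x_ℓ, x_r) a_r ≥ 0. -/

import Mathlib

open Matrix

/-!
Stack the `p` rotated copies of the points: the `n` points `x ℓ` together with the rotations give
the `n * p` points `R i x ℓ` on the sphere, and the vectors `a ℓ i • e_i` attached to them. The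
quadratic form of `F` at this configuration is exactly the quadratic form of the rotated kernel at
`(x, a)`, so it is nonnegative.
-/

section Kernel

variable {X ι : Type*} [Fintype ι]

def IsPosDefKernel (S : Set X) (F : X → X → Matrix ι ι ℝ) : Prop :=
  ∀ (n : ℕ) (x : Fin n → X), (∀ ℓ, x ℓ ∈ S) → ∀ (a : Fin n → ι → ℝ),
    0 ≤ ∑ ℓ, ∑ r, a ℓ ⬝ᵥ (F (x ℓ) (x r)).mulVec (a r)

theorem IsPosDefKernel.nonneg_of_fintype {S : Set X} {F : X → X → Matrix ι ι ℝ}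
    (hF : IsPosDefKernel S F) {κ : Type*} [Fintype κ] (x : κ → X) (hx : ∀ k, x k ∈ S)
    (a : κ → ι → ℝ) : 0 ≤ ∑ k, ∑ m, a k ⬝ᵥ (F (x k) (x m)).mulVec (a m) := by
  let e := (Fintype.equivFin κ).symm
  have h := hF _ (x ∘ e) (fun _ => hx _) (a ∘ e)
  simp only [Function.comp_apply] at h
  rwa [e.sum_comp fun k => ∑ r, a k ⬝ᵥ (F (x k) (x (e r))).mulVec (a (e r)),
    Finset.sum_congr rfl fun k _ => e.sum_comp fun m => a k ⬝ᵥ (F (x k) (x m)).mulVec (a m)] at h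

theorem single_dotProduct_mulVec_single [DecidableEq ι] (M : Matrix ι ι ℝ) (i j : ι) (u v : ℝ) :
    Pi.single i u ⬝ᵥ M.mulVec (Pi.single j v) = u * M i j * v := by
  rw [single_dotProduct, mulVec_single, mul_assoc]
  rfl

theorem dotProduct_mulVec_eq_sum (M : Matrix ι ι ℝ) (u v : ι → ℝ) :
    u ⬝ᵥ M.mulVec v = ∑ i, ∑ j, u i * M i j * v j := by
  simp only [dotProduct, mulVec, Finset.mul_sum, mul_assoc]

theorem IsPosDefKernel.of_entrywise_comp [DecidableEq ι] {S : Set X} {F : X → X → Matrix ι ι ℝ}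
    (hF : IsPosDefKernel S F) (g : ι → X → X) (hg : ∀ i, Set.MapsTo (g i) S S) :
    IsPosDefKernel S fun x y => Matrix.of fun i j => F (g i x) (g j y) i j := by
  intro n x hx a
  have h := hF.nonneg_of_fintype (fun k : Fin n × ι => g k.2 (x k.1)) (fun k => hg k.2 (hx k.1))
    (fun k => Pi.single k.2 (a k.1 k.2))
  simp only [single_dotProduct_mulVec_single, Fintype.sum_prod_type] at h
  simp only [dotProduct_mulVec_eq_sum, of_apply]
  exact h.trans_eq (Finset.sum_congr rfl fun _ _ => Finset.sum_comm)

end Kernel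

theorem dotProduct_self_mulVec_of_transpose_mul_self {m : Type*} [Fintype m] [DecidableEq m]
    {R : Matrix m m ℝ} (hR : Rᵀ * R = 1) (x : m → ℝ) :
    R.mulVec x ⬝ᵥ R.mulVec x = x ⬝ᵥ x := by
  rw [dotProduct_mulVec, vecMul_mulVec, hR, vecMul_one]

theorem rotated_kernel_posdef_general (d p : ℕ)
    (F : (Fin (d + 1) → ℝ) → (Fin (d + 1) → ℝ) → Matrix (Fin p) (Fin p) ℝ)
    (hF : ∀ (n : ℕ) (x : Fin n → Fin (d + 1) → ℝ),
      (∀ ℓ, x ℓ ⬝ᵥ x ℓ = 1) → ∀ (a : Fin n → Fin p → ℝ),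
      0 ≤ ∑ ℓ, ∑ r, a ℓ ⬝ᵥ (F (x ℓ) (x r)).mulVec (a r))
    (R : Fin p → Matrix (Fin (d + 1)) (Fin (d + 1)) ℝ)
    (hR : ∀ i, (R i).transpose * R i = 1) :
    ∀ (n : ℕ) (x : Fin n → Fin (d + 1) → ℝ),
      (∀ ℓ, x ℓ ⬝ᵥ x ℓ = 1) → ∀ (a : Fin n → Fin p → ℝ),
      0 ≤ ∑ ℓ, ∑ r, a ℓ ⬝ᵥ
        (Matrix.of fun i j : Fin p =>
          F ((R i).mulVec (x ℓ)) ((R j).mulVec (x r)) i j).mulVec (a r) :=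
  IsPosDefKernel.of_entrywise_comp (S := {x | x ⬝ᵥ x = 1}) hF (fun i => (R i).mulVec)
    fun i x hx => (dotProduct_self_mulVec_of_transpose_mul_self (hR i) x).trans hx

/-- If `F : S^d × S^d → ℝ^{p×p}` is a positive definite matrix-valued kernel and
`R_1, …, R_p ∈ SO(d+1)`, then `F^a_{ij}(x,y) := F_{ij}(R_i x, R_j y)` is also
positive definite. -/
theorem rotated_kernel_posdef (d p : ℕ)
    (F : (Fin (d + 1) → ℝ) → (Fin (d + 1) → ℝ) → Matrix (Fin p) (Fin p) ℝ)
    (hF : ∀ (n : ℕ) (x : Fin n → Fin (d + 1) → ℝ),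
      (∀ ℓ, x ℓ ⬝ᵥ x ℓ = 1) → ∀ (a : Fin n → Fin p → ℝ),
      0 ≤ ∑ ℓ, ∑ r, a ℓ ⬝ᵥ (F (x ℓ) (x r)).mulVec (a r))
    (R : Fin p → Matrix (Fin (d + 1)) (Fin (d + 1)) ℝ)
    (hR : ∀ i, (R i).transpose * R i = 1) (hRdet : ∀ i, (R i).det = 1) :
    ∀ (n : ℕ) (x : Fin n → Fin (d + 1) → ℝ),
      (∀ ℓ, x ℓ ⬝ᵥ x ℓ = 1) → ∀ (a : Fin n → Fin p → ℝ),
      0 ≤ ∑ ℓ, ∑ r, a ℓ ⬝ᵥ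
        (Matrix.of fun i j : Fin p =>
          F ((R i).mulVec (x ℓ)) ((R j).mulVec (x r)) i j).mulVec (a r) :=
  rotated_kernel_posdef_general d p F hF R hR
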